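/- arXiv:1701.04958 — 7 statements merged into one kernel-verified Lean document; each statement's English description precedes it below -/
import Mathlib

section
/- Let A be a T×m matrix over a finite field F and let b ∈ F^m. Fix an index q ∈ [m] and a set S ⊆ [m]\{q}. Then b_q can be recovered from the vector Ab together with the entries b_i for i ∈ S (i.e., there is a function of (Ab, b_S) equal to b_q for all b) if and only if the column A_q does not lie in the span of the columns A_j for j ∈ [m] \ (S ∪ {q}). -/
/-!
`b_q` is recoverable iff it is constant on the fibres of `b ↦ (A b, b_S)`; by linearity this
says that every `d` with `A d = 0` and `d_S = 0` has `d_q = 0`. A kernel vector `d` vanishing on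
`S` with `d_q ≠ 0`, rescaled to `d_q = -1`, is exactly an expression of `A_q` as a linear
combination of the columns outside `S ∪ {q}`.
-/

open Matrix

theorem Function.exists_factor₂_iff {α β γ δ : Type*} [Nonempty δ] (g : α → β) (h : α → γ)
    (k : α → δ) :
    (∃ f : β → γ → δ, ∀ a, f (g a) (h a) = k a) ↔
      ∀ a a', g a = g a' → h a = h a' → k a = k a' := by
  constructor
  · rintro ⟨f, hf⟩ a a' hg hh
    rw [← hf, ← hf, hg, hh]
  · intro hk
    obtain ⟨e, he⟩ := (factorsThrough_iff (f := fun a => (g a, h a)) k).1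
      fun a a' hgh => hk a a' (congrArg Prod.fst hgh) (congrArg Prod.snd hgh)
    exact ⟨fun b c => e (b, c), fun a => (congrFun he a).symm⟩

theorem AddMonoidHom.forall_eq_imp_eq_iff {G H K L : Type*} [AddGroup G] [AddGroup H]
    [AddGroup K] [AddGroup L] (g : G →+ H) (h : G →+ K) (k : G →+ L) :
    (∀ a a', g a = g a' → h a = h a' → k a = k a') ↔ ∀ d, g d = 0 → h d = 0 → k d = 0 := by
  constructor
  · intro hk d hg hh
    simpa using hk d 0 (by simpa using hg) (by simpa using hh)
  · intro hk a a' hg hh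
    rw [← sub_eq_zero, ← map_sub]
    exact hk _ (by rw [map_sub, hg, sub_self]) (by rw [map_sub, hh, sub_self])

theorem Submodule.mem_span_image_diff_singleton_iff {ι K M : Type*} [Fintype ι] [Field K]
    [AddCommGroup M] [Module K M] {v : ι → M} {t : Set ι} {q : ι} (hq : q ∈ t) :
    v q ∈ span K (v '' (t \ {q})) ↔
      ∃ d : ι → K, ∑ j, d j • v j = 0 ∧ (∀ j ∉ t, d j = 0) ∧ d q ≠ 0 := by
  classical
  constructor
  · intro hspan
    obtain ⟨c, hc, hcv⟩ := (Finsupp.mem_span_image_iff_linearCombination K).1 hspan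
    have hc_zero : ∀ j ∉ t \ {q}, c j = 0 :=
      fun j hj => Finsupp.notMem_support_iff.1 fun h => hj (hc h)
    refine ⟨(⇑c - Pi.single q 1 : ι → K), ?_, fun j hj => ?_, ?_⟩
    · simp [sub_smul, Finset.sum_sub_distrib, ← hcv, Finsupp.linearCombination_apply,
        Finsupp.sum_fintype]
    · simp [hc_zero j (fun h => hj h.1), show j ≠ q from fun h => hj (h ▸ hq)]
    · simp [hc_zero q (by simp)]
  · rintro ⟨d, hd, hdt, hdq⟩
    set c : ι → K := Pi.single q 1 - (d q)⁻¹ • d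
    have hc_zero : ∀ j ∉ t \ {q}, c j = 0 := by
      intro j hj
      by_cases hjq : j = q
      · subst hjq
        simp [c, hdq]
      · simp [c, hjq, hdt j fun h => hj ⟨h, hjq⟩]
    have hvq : v q = ∑ j, c j • v j := by
      simp [c, sub_smul, Finset.sum_sub_distrib, mul_smul, ← Finset.smul_sum, hd]
    rw [hvq]
    refine sum_mem fun j _ => ?_
    by_cases hj : j ∈ t \ {q}
    · exact smul_mem _ _ (subset_span (Set.mem_image_of_mem v hj))
    · simp [hc_zero j hj]

theorem Matrix.mulVec_eq_sum_smul_col {m n R : Type*} [Fintype n] [CommSemiring R]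
    (A : Matrix m n R) (d : n → R) : A *ᵥ d = ∑ j, d j • A.col j := by
  simp [Matrix.mulVec_eq_sum, Matrix.col]

theorem stmt_0_general {F : Type*} [Field F] {T m : ℕ}
    (A : Matrix (Fin T) (Fin m) F) (q : Fin m) (S : Finset (Fin m)) (hq : q ∉ S) :
    (∃ f : (Fin T → F) → ({i // i ∈ S} → F) → F,
        ∀ b : Fin m → F, f (A.mulVec b) (fun i => b i.1) = b q) ↔
      (fun i => A i q) ∉
        Submodule.span F ((fun j i => A i j) '' {j : Fin m | j ∉ S ∧ j ≠ q}) := by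
  rw [Function.exists_factor₂_iff]
  refine (AddMonoidHom.forall_eq_imp_eq_iff A.mulVecLin.toAddMonoidHom
      (LinearMap.funLeft F F (Subtype.val : S → Fin m)).toAddMonoidHom
      (LinearMap.proj (R := F) (φ := fun _ => F) q).toAddMonoidHom).trans ?_
  change (∀ d : Fin m → F, A *ᵥ d = 0 → (fun i : S => d i) = 0 → d q = 0) ↔
    A.col q ∉ Submodule.span F (A.col '' ((↑S)ᶜ \ {q}))
  rw [Submodule.mem_span_image_diff_singleton_iff hq]
  simp only [← mulVec_eq_sum_smul_col, Set.mem_compl_iff, Finset.mem_coe, not_not, not_exists,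
    not_and, funext_iff (f := fun i : S => _), Pi.zero_apply, Subtype.forall]

/-- Index coding decodability criterion: `b_q` can be recovered from `A b` together with the
side-information entries `b_S` iff the column `A_q` does not lie in the span of the columns
`A_j`, `j ∈ [m] \ (S ∪ {q})`. -/
theorem stmt_0 {F : Type*} [Field F] [Fintype F] {T m : ℕ}
    (A : Matrix (Fin T) (Fin m) F) (q : Fin m) (S : Finset (Fin m)) (hq : q ∉ S) :
    (∃ f : (Fin T → F) → ({i // i ∈ S} → F) → F,
        ∀ b : Fin m → F, f (A.mulVec b) (fun i => b i.1) = b q) ↔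
      (fun i => A i q) ∉
        Submodule.span F ((fun j i => A i j) '' {j : Fin m | j ∉ S ∧ j ≠ q}) :=
  stmt_0_general A q S hq
end

section
/- Let A be a T×m matrix over a field and let s ∈ [m-1]. Define D(A,s) as the set of pairs (q, S) with q ∈ [m], S ⊆ [m]\{q}, |S| = s, such that A_q ∉ span(A_{[m]\(S∪{q})}). Then |D(A,s)| ≤ T · C(m, s), where C(m,s) is the binomial coefficient. -/
/-!
The columns `A_q` that are not in the span of the other columns outside `S` form a linearly
independent family in `F^T`, so for each of the `C(m, s)` side-information sets `S` at most `T`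
requests `q` are decodable.
-/

open Finset
open scoped Classical

theorem card_filter_notMem_span_le {ι F V : Type*} [Fintype ι] [Field F] [AddCommGroup V]
    [Module F V] [FiniteDimensional F V] (v : ι → V) (U : Set ι) [DecidablePred (· ∈ U)] :
    #{q | q ∈ U ∧ v q ∉ Submodule.span F (v '' {j | j ∈ U ∧ j ≠ q})} ≤
      Module.finrank F V := by
  set Q := ({q | q ∈ U ∧ v q ∉ Submodule.span F (v '' {j | j ∈ U ∧ j ≠ q})} : Finset ι)
  have hli : LinearIndependent F (fun q : Q => v q) := by
    rw [linearIndependent_iff_notMem_span]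
    rintro ⟨q, hq⟩ hspan
    obtain ⟨-, hq_notMem⟩ := (mem_filter.mp hq).2
    refine hq_notMem (Submodule.span_mono ?_ hspan)
    rintro _ ⟨q', hne, rfl⟩
    exact ⟨q', ⟨(mem_filter.mp q'.2).2.1, fun h => hne.2 (Subtype.ext h)⟩, rfl⟩
  simpa using hli.fintype_card_le_finrank

theorem card_filter_snd_eq_le_of_fst_mem {α β : Type*} [DecidableEq β] {D : Finset (α × β)}
    {b : β} {t : Finset α}
    (h : ∀ a, (a, b) ∈ D → a ∈ t) : #{p ∈ D | p.2 = b} ≤ #t := by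
  refine card_le_card_of_injOn Prod.fst ?_ ?_
  · rintro ⟨a, b'⟩ hp
    obtain ⟨hpD, rfl⟩ := mem_filter.mp hp
    exact h a hpD
  · rintro ⟨a, b₁⟩ hp ⟨a', b₂⟩ hp' (rfl : a = a')
    obtain ⟨-, rfl : b₁ = b⟩ := mem_filter.mp hp
    obtain ⟨-, rfl : b₂ = b₁⟩ := mem_filter.mp hp'
    rfl

theorem stmt_3_general {F : Type*} [Field F] {T m : ℕ}
    (A : Matrix (Fin T) (Fin m) F) (s : ℕ) :
    ((Finset.univ : Finset (Fin m × Finset (Fin m))).filter fun p =>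
        p.1 ∉ p.2 ∧ p.2.card = s ∧
          (fun i => A i p.1) ∉
            Submodule.span F
              ((fun j i => A i j) '' {j : Fin m | j ∉ p.2 ∧ j ≠ p.1})).card
      ≤ T * m.choose s := by
  set D := ((Finset.univ : Finset (Fin m × Finset (Fin m))).filter fun p =>
    p.1 ∉ p.2 ∧ p.2.card = s ∧ (fun i => A i p.1) ∉
      Submodule.span F ((fun j i => A i j) '' {j : Fin m | j ∉ p.2 ∧ j ≠ p.1}))
  have hS_mem : ∀ p ∈ D, p.2 ∈ powersetCard s univ := fun p hp =>
    mem_powersetCard.mpr ⟨subset_univ _, (mem_filter.mp hp).2.2.1⟩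
  have hfiber : ∀ S ∈ powersetCard s (univ : Finset (Fin m)), #{p ∈ D | p.2 = S} ≤ T := by
    intro S _
    refine (card_filter_snd_eq_le_of_fst_mem ?_).trans
      ((card_filter_notMem_span_le (F := F) (fun j i => A i j) {j | j ∉ S}).trans_eq
        (Module.finrank_fin_fun F))
    intro q hq
    obtain ⟨hqS, -, hq_notMem⟩ := (mem_filter.mp hq).2
    exact mem_filter.mpr ⟨mem_univ _, hqS, hq_notMem⟩
  simpa [card_powersetCard] using card_le_mul_card_image_of_maps_to hS_mem T hfiber

/-- Upper bound on the number of decodable (request, side-information) pairs: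
`|D(A,s)| ≤ T · C(m,s)`. -/
theorem stmt_3 {F : Type*} [Field F] {T m : ℕ}
    (A : Matrix (Fin T) (Fin m) F) (s : ℕ) (hs1 : 1 ≤ s) (hs2 : s ≤ m - 1) :
    ((Finset.univ : Finset (Fin m × Finset (Fin m))).filter fun p =>
        p.1 ∉ p.2 ∧ p.2.card = s ∧
          (fun i => A i p.1) ∉
            Submodule.span F
              ((fun j i => A i j) '' {j : Fin m | j ∉ p.2 ∧ j ≠ p.1})).card
      ≤ T * m.choose s :=
  stmt_3_general A s
end

section
/- Consider the block matrix A^base ∈ F^{T×m} built as follows: choose k dividing T, ℓ ≥ 1 with kℓ ≤ m, and a (T/k)×ℓ matrix A_b that is a generator matrix of an [ℓ, T/k] MDS code; place k diagonal copies of A_b occupying k disjoint column-segments of size ℓ each (with disjoint row-blocks of size T/k each), and fill the remaining m − kℓ columns with zeros. Fix s with ℓ − T/k ≤ s. Then the set of indices q ∈ [m] for which there exists S ⊆ [m]\{q}, |S| = s, with (q,S) decodable in A^base, is exactly the set of indices of nonzero columns, and has size kℓ. -/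
/-!
Masking the rows outside a row block is a linear map that fixes the columns of the matching
segment and kills every other column. So if a column `q` of segment `c` lay in the span of the
columns outside `S ∪ {q}`, it would already lie in the span of the columns of segment `c` outside
`S ∪ {q}`. Choosing `S` to contain as many of the `ℓ - 1` other columns of segment `c` as
possible leaves at most `ℓ - 1 - s ≤ t - 1` of them, and together with `q` they are at most `t`
columns of the MDS block, hence linearly independent. Zero columns are never decodable, and the
nonzero columns are exactly the `k ℓ` columns of the segments.
-/

open Finset
open scoped Classical

theorem mem_span_image_inter_of_block {ι κ R : Type*} [Semiring R] {v : κ → ι → R}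
    {p : ι → Prop} {P X : Set κ}
    (hin : ∀ j ∈ P, ∀ i, ¬ p i → v j i = 0) (hout : ∀ j ∉ P, ∀ i, p i → v j i = 0)
    {q : κ} (hq : q ∈ P) (h : v q ∈ Submodule.span R (v '' X)) :
    v q ∈ Submodule.span R (v '' (X ∩ P)) := by
  let mask : (ι → R) →ₗ[R] ι → R := LinearMap.pi fun i => if p i then LinearMap.proj i else 0
  have mask_apply (j : κ) : mask (v j) = if j ∈ P then v j else 0 := by
    ext i
    by_cases hj : j ∈ P <;> by_cases hi : p i <;> simp [mask, hj, hi, hin, hout]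
  have hmask := Submodule.mem_map_of_mem (f := mask) h
  rw [Submodule.map_span, mask_apply, if_pos hq] at hmask
  refine Submodule.span_le.2 ?_ hmask
  rintro _ ⟨_, ⟨j, hjX, rfl⟩, rfl⟩
  rw [SetLike.mem_coe, mask_apply]
  split_ifs with hj
  · exact Submodule.subset_span ⟨j, ⟨hjX, hj⟩, rfl⟩
  · exact Submodule.zero_mem _

theorem Finset.exists_subset_card_eq_card_sdiff_le {α : Type*} {P U : Finset α} (hPU : P ⊆ U)
    {n : ℕ} (hn : n ≤ U.card) : ∃ S ⊆ U, S.card = n ∧ (P \ S).card ≤ P.card - n := by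
  obtain ⟨S₀, hS₀P, hS₀⟩ := P.exists_subset_card_eq (min_le_right n P.card)
  obtain ⟨S, hS₀S, hSU, hS⟩ :=
    exists_subsuperset_card_eq (hS₀P.trans hPU) (hS₀ ▸ min_le_left n P.card) hn
  refine ⟨S, hSU, hS, ?_⟩
  calc (P \ S).card ≤ (P \ S₀).card := card_le_card (sdiff_subset_sdiff subset_rfl hS₀S)
    _ = P.card - n := by rw [card_sdiff_of_subset hS₀P, hS₀]; omega

theorem linearIndepOn_of_card_le {κ R M : Type*} [Semiring R] [AddCommMonoid M] [Module R M]
    {v : κ → M} {P K : Finset κ} {t : ℕ}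
    (hP : ∀ J ⊆ P, J.card = t → LinearIndepOn R v (J : Set κ)) (htP : t ≤ P.card)
    (hKP : K ⊆ P) (hKt : K.card ≤ t) : LinearIndepOn R v (K : Set κ) := by
  obtain ⟨J, hKJ, hJP, hJ⟩ := exists_subsuperset_card_eq hKP hKt htP
  exact (hP J hJP hJ).mono (coe_subset.2 hKJ)

theorem notMem_span_image_of_block {ι κ F : Type*} [Field F] {v : κ → ι → F} {p : ι → Prop}
    {P X : Finset κ} {t : ℕ}
    (hin : ∀ j ∈ P, ∀ i, ¬ p i → v j i = 0) (hout : ∀ j ∉ P, ∀ i, p i → v j i = 0)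
    (hP : ∀ J ⊆ P, J.card = t → LinearIndepOn F v (J : Set κ)) (htP : t ≤ P.card)
    {q : κ} (hq : q ∈ P) (hqX : q ∉ X) (hXP : (X ∩ P).card < t) :
    v q ∉ Submodule.span F (v '' X) := by
  intro h
  have h' := mem_span_image_inter_of_block hin hout hq h
  have hins : LinearIndepOn F v (insert q (X ∩ P) : Finset κ) :=
    linearIndepOn_of_card_le hP htP (insert_subset hq inter_subset_right)
      ((card_insert_le _ _).trans hXP)
  rw [coe_insert, coe_inter, linearIndepOn_insert (fun hq' => hqX hq'.1)] at hins
  exact hins.2 h'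

def IsDecodable (R : Type*) {κ M : Type*} [Semiring R] [AddCommMonoid M] [Module R M]
    (v : κ → M) (q : κ) (S : Finset κ) : Prop :=
  v q ∉ Submodule.span R (v '' {j | j ∉ S ∧ j ≠ q})

theorem IsDecodable.ne_zero {κ R M : Type*} [Semiring R] [AddCommMonoid M] [Module R M]
    {v : κ → M} {q : κ} {S : Finset κ} (h : IsDecodable R v q S) : v q ≠ 0 :=
  fun h0 => h (h0 ▸ Submodule.zero_mem _)

theorem Finset.card_filter_isSome {κ σ : Type*} [Fintype κ] [Fintype σ] [DecidableEq σ]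
    (f : κ → Option σ) :
    (univ.filter fun j => (f j).isSome).card = ∑ c, (univ.filter fun j => f j = some c).card := by
  rw [card_eq_sum_card_fiberwise (f := f) (t := univ.map Function.Embedding.some), sum_map]
  · refine sum_congr rfl fun c _ => congrArg card ?_
    ext j
    simp +contextual [Option.isSome_iff_exists]
  · intro j hj
    obtain ⟨c, hc⟩ := Option.isSome_iff_exists.1 (mem_filter.1 hj).2
    simp [hc]

section BlockMatrix

variable {ι κ σ F : Type*} [Field F] [Fintype κ] [DecidableEq σ] {v : κ → ι → F}
  {seg : κ → Option σ} {rb : ι → σ} {t ℓ : ℕ}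

theorem ne_zero_iff_isSome (ht : 1 ≤ t) (htℓ : t ≤ ℓ)
    (hseg : ∀ c, (univ.filter fun j => seg j = some c).card = ℓ)
    (hzero : ∀ j, seg j = none → ∀ i, v j i = 0)
    (hMDS : ∀ c, ∀ J ⊆ univ.filter fun j => seg j = some c, J.card = t →
      LinearIndepOn F v (J : Set κ))
    (q : κ) : v q ≠ 0 ↔ (seg q).isSome := by
  refine ⟨fun hq => Option.ne_none_iff_isSome.1 fun h => hq (funext (hzero q h)), fun hq => ?_⟩
  obtain ⟨c, hc⟩ := Option.isSome_iff_exists.1 hq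
  have hq : LinearIndepOn F v (({q} : Finset κ) : Set κ) :=
    linearIndepOn_of_card_le (hMDS c) (by rwa [hseg c]) (by simp [hc]) (by simpa using ht)
  exact hq.ne_zero (by simp)

theorem exists_isDecodable_of_seg_eq_some (ht : 1 ≤ t) (htℓ : t ≤ ℓ)
    (hseg : ∀ c, (univ.filter fun j => seg j = some c).card = ℓ)
    (hzero : ∀ j, seg j = none → ∀ i, v j i = 0)
    (hblock : ∀ j c, seg j = some c → ∀ i, rb i ≠ c → v j i = 0)
    (hMDS : ∀ c, ∀ J ⊆ univ.filter fun j => seg j = some c, J.card = t →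
      LinearIndepOn F v (J : Set κ))
    {s : ℕ} (hs1 : ℓ - t ≤ s) (hs2 : s ≤ Fintype.card κ - 1) {q : κ} {c : σ}
    (hq : seg q = some c) : ∃ S : Finset κ, S.card = s ∧ q ∉ S ∧ IsDecodable F v q S := by
  set P := univ.filter fun j => seg j = some c
  have hqP : q ∈ P := by simp [P, hq]
  obtain ⟨S, hSU, hS, hPS⟩ := exists_subset_card_eq_card_sdiff_le (erase_subset_erase q
    (subset_univ P)) (n := s) (by rwa [card_erase_of_mem (mem_univ q), card_univ])
  have hqS : q ∉ S := fun h => (mem_erase.1 (hSU h)).1 rfl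
  refine ⟨S, hS, hqS, ?_⟩
  have hX : (((univ \ S).erase q : Finset κ) : Set κ) = {j | j ∉ S ∧ j ≠ q} := by
    ext j; simp [and_comm]
  have hXP : (univ \ S).erase q ∩ P = P.erase q \ S := by
    ext j; simp [and_comm, and_left_comm]
  rw [IsDecodable, ← hX]
  refine notMem_span_image_of_block (p := fun i => rb i = c) ?_ ?_ (hMDS c) ?_ hqP (by simp) ?_
  · exact fun j hj i hi => hblock j c (mem_filter.1 hj).2 i hi
  · intro j hj i hi
    rcases hj' : seg j with _ | c'
    · exact hzero j hj' i
    · exact hblock j c' hj' i (by rintro rfl; simp [hj', hi] at hj)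
  · rwa [hseg c]
  · rw [hXP]
    have hPq := card_erase_of_mem hqP
    have hPc : P.card = ℓ := hseg c
    omega

end BlockMatrix

theorem stmt_6_general {F : Type*} [Field F] {k t ℓ m : ℕ}
    (ht : 1 ≤ t) (htℓ : t ≤ ℓ)
    (A : Matrix (Fin (k * t)) (Fin m) F)
    (seg : Fin m → Option (Fin k)) (rb : Fin (k * t) → Fin k)
    (hseg : ∀ c : Fin k, (Finset.univ.filter fun j => seg j = some c).card = ℓ)
    (hzero : ∀ j, seg j = none → ∀ i, A i j = 0)
    (hblock : ∀ j c, seg j = some c → ∀ i, rb i ≠ c → A i j = 0)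
    (hMDS : ∀ c : Fin k, ∀ J : Finset (Fin m), (∀ j ∈ J, seg j = some c) → J.card = t →
      LinearIndependent F (fun j : {j // j ∈ J} => fun i => A i j.1))
    (s : ℕ) (hs1 : ℓ - t ≤ s) (hs2 : s ≤ m - 1) :
    (Finset.univ.filter fun q : Fin m => ∃ S : Finset (Fin m), S.card = s ∧ q ∉ S ∧
        (fun i => A i q) ∉
          Submodule.span F ((fun j i => A i j) '' {j : Fin m | j ∉ S ∧ j ≠ q}))
      = (Finset.univ.filter fun q : Fin m => (fun i => A i q) ≠ 0) ∧
    (Finset.univ.filter fun q : Fin m => ∃ S : Finset (Fin m), S.card = s ∧ q ∉ S ∧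
        (fun i => A i q) ∉
          Submodule.span F ((fun j i => A i j) '' {j : Fin m | j ∉ S ∧ j ≠ q})).card
      = k * ℓ := by
  have hindep : ∀ c, ∀ J ⊆ univ.filter fun j => seg j = some c, J.card = t →
      LinearIndepOn F (fun j i => A i j) (J : Set (Fin m)) :=
    fun c J hJ => hMDS c J fun j hj => (mem_filter.1 (hJ hj)).2
  have hnz := ne_zero_iff_isSome ht htℓ hseg hzero hindep
  have hdec : ∀ q, (∃ S : Finset (Fin m), S.card = s ∧ q ∉ S ∧
      IsDecodable F (fun j i => A i j) q S) ↔ (fun i => A i q) ≠ 0 := by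
    refine fun q => ⟨fun ⟨S, _, _, hS⟩ => hS.ne_zero, fun hq => ?_⟩
    obtain ⟨c, hc⟩ := Option.isSome_iff_exists.1 ((hnz q).1 hq)
    exact exists_isDecodable_of_seg_eq_some ht htℓ hseg hzero hblock hindep hs1
      (by simpa using hs2) hc
  simp only [IsDecodable] at hdec
  simp only [hdec]
  rw [filter_congr fun q _ => hnz q, card_filter_isSome]
  simp [hseg]

/-- For the block-MDS base matrix `A^base` (with `k` column-segments of size `ℓ`, each carrying
a `(T/k) × ℓ` MDS generator block on disjoint row blocks of size `t = T/k`, and all other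
columns zero), and any `s` with `ℓ - T/k ≤ s ≤ m - 1`: the set of requests `q` that are
decodable with some side-information set of size `s` is exactly the set of indices of nonzero
columns, and it has size `k·ℓ`. -/
theorem stmt_6 {F : Type*} [Field F] {k t ℓ m : ℕ}
    (ht : 1 ≤ t) (htℓ : t ≤ ℓ) (hkl : k * ℓ ≤ m)
    (A : Matrix (Fin (k * t)) (Fin m) F)
    (seg : Fin m → Option (Fin k)) (rb : Fin (k * t) → Fin k)
    (hseg : ∀ c : Fin k, (Finset.univ.filter fun j => seg j = some c).card = ℓ)
    (hrb : ∀ c : Fin k, (Finset.univ.filter fun i => rb i = c).card = t)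
    (hzero : ∀ j, seg j = none → ∀ i, A i j = 0)
    (hblock : ∀ j c, seg j = some c → ∀ i, rb i ≠ c → A i j = 0)
    (hMDS : ∀ c : Fin k, ∀ J : Finset (Fin m), (∀ j ∈ J, seg j = some c) → J.card = t →
      LinearIndependent F (fun j : {j // j ∈ J} => fun i => A i j.1))
    (s : ℕ) (hs1 : ℓ - t ≤ s) (hs2 : s ≤ m - 1) :
    (Finset.univ.filter fun q : Fin m => ∃ S : Finset (Fin m), S.card = s ∧ q ∉ S ∧
        (fun i => A i q) ∉
          Submodule.span F ((fun j i => A i j) '' {j : Fin m | j ∉ S ∧ j ≠ q}))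
      = (Finset.univ.filter fun q : Fin m => (fun i => A i q) ≠ 0) ∧
    (Finset.univ.filter fun q : Fin m => ∃ S : Finset (Fin m), S.card = s ∧ q ∉ S ∧
        (fun i => A i q) ∉
          Submodule.span F ((fun j i => A i j) '' {j : Fin m | j ∉ S ∧ j ≠ q})).card
      = k * ℓ :=
  stmt_6_general ht htℓ A seg rb hseg hzero hblock hMDS s hs1 hs2
end

section
/- Fix q ∈ [m] whose column in A^base is nonzero, lying in a segment of ℓ columns carrying an MDS block of rank T/k. Then for S ⊆ [m]\{q} with |S| = s, the pair (q,S) is decodable in A^base if and only if the number j of elements of S whose columns lie in the same segment as q satisfies ℓ − T/k ≤ j ≤ ℓ − 1. Consequently, the number of such S equals Σ_{j=ℓ−T/k}^{ℓ−1} C(ℓ−1, j) · C(m−ℓ, s−j). -/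
/-!
The rows of block `c` are touched only by the columns of segment `c`, and every other column
vanishes on them. Splitting the available columns accordingly, the column of `q` lies in their span
iff it lies in the span of the available columns of its own segment. Those live in a
`t`-dimensional coordinate subspace and any `t` of them are independent, so the column of `q` is
in their span iff at least `t` of them are available; as `ℓ - 1 - j` of them are, decodability
means `ℓ - t ≤ j`. The count follows by sorting the sets `S` by `j` and choosing the `j` elements
inside the segment and the `s - j` elements outside it independently.
-/

open Finset Module Submodule
open scoped Classical

theorem mem_span_union_iff_of_disjoint {R M : Type*} [Ring R] [AddCommGroup M] [Module R M]
    {W W' : Submodule R M} (hWW' : Disjoint W W') {s s' : Set M} (hs : s ⊆ W) (hs' : s' ⊆ W')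
    {x : M} (hx : x ∈ W) : x ∈ span R (s ∪ s') ↔ x ∈ span R s := by
  refine ⟨fun hmem => ?_, fun h => span_mono Set.subset_union_left h⟩
  rw [span_union, Submodule.mem_sup] at hmem
  obtain ⟨y, hy, z, hz, rfl⟩ := hmem
  have hzW : z ∈ W := by simpa using W.sub_mem hx (span_le.mpr hs hy)
  obtain rfl : z = 0 := disjoint_def.mp hWW' z hzW (span_le.mpr hs' hz)
  simpa using hy

section GeneralPosition

variable {K M ι : Type*} [Field K] [AddCommGroup M] [Module K M]

variable (K) in
/-- The defining property of the columns of a generator matrix of an MDS code of dimension `t`. -/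
def IsMDSOn (v : ι → M) (P : Finset ι) (t : ℕ) : Prop :=
  ∀ J ⊆ P, #J = t → LinearIndepOn K v (J : Set ι)

namespace IsMDSOn

variable {v : ι → M} {P : Finset ι} {t : ℕ}

theorem linearIndepOn_of_card_le (h : IsMDSOn K v P t) (htP : t ≤ #P) {J : Finset ι}
    (hJP : J ⊆ P) (hJt : #J ≤ t) : LinearIndepOn K v (J : Set ι) := by
  obtain ⟨J', hJJ', hJ'P, hJ't⟩ := exists_subsuperset_card_eq hJP hJt htP
  exact (h J' hJ'P hJ't).mono (coe_subset.mpr hJJ')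

theorem le_span_image (h : IsMDSOn K v P t) {W : Submodule K M} [FiniteDimensional K W]
    (hW : finrank K W ≤ t) (hPW : ∀ j ∈ P, v j ∈ W) {J : Finset ι} (hJP : J ⊆ P)
    (hJt : t ≤ #J) : W ≤ span K (v '' J) := by
  obtain ⟨J', hJ'J, hJ't⟩ := exists_subset_card_eq hJt
  have hle : span K (v '' J') ≤ W :=
    span_le.mpr (by rintro _ ⟨j, hj, rfl⟩; exact hPW j (hJP (hJ'J hj)))
  have hrank : finrank K (span K (v '' J')) = t := by
    rw [Set.image_eq_range, finrank_span_eq_card (h J' (hJ'J.trans hJP) hJ't)]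
    simpa using hJ't
  rw [← eq_of_le_of_finrank_le hle (hrank ▸ hW)]
  exact span_mono (Set.image_mono (coe_subset.mpr hJ'J))

theorem mem_span_image_iff (h : IsMDSOn K v P t) {W : Submodule K M} [FiniteDimensional K W]
    (hW : finrank K W ≤ t) (hPW : ∀ j ∈ P, v j ∈ W) (htP : t ≤ #P) {q : ι} (hq : q ∈ P)
    {J : Finset ι} (hJP : J ⊆ P) (hqJ : q ∉ J) : v q ∈ span K (v '' J) ↔ t ≤ #J := by
  refine ⟨fun hmem => ?_, fun hJt => h.le_span_image hW hPW hJP hJt (hPW q hq)⟩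
  by_contra! hJt
  have hindep := h.linearIndepOn_of_card_le htP (insert_subset hq hJP)
    (by rw [card_insert_of_notMem hqJ]; omega)
  rw [coe_insert, linearIndepOn_insert (mod_cast hqJ)] at hindep
  exact hindep.2 hmem

theorem mem_span_image_iff_le_card_inter (h : IsMDSOn K v P t) {W W' : Submodule K M}
    [FiniteDimensional K W] (hWW' : Disjoint W W') (hW : finrank K W ≤ t)
    (hPW : ∀ j ∈ P, v j ∈ W) (hPW' : ∀ j ∉ P, v j ∈ W') (htP : t ≤ #P) {q : ι} (hq : q ∈ P)
    {T : Finset ι} (hqT : q ∉ T) : v q ∈ span K (v '' T) ↔ t ≤ #(T ∩ P) := by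
  have hsplit : (T : Set ι) = ↑(T ∩ P) ∪ ↑(T \ P) := by
    rw [← coe_union, union_comm, sdiff_union_inter]
  rw [hsplit, Set.image_union, mem_span_union_iff_of_disjoint hWW' ?_ ?_ (hPW q hq)]
  · exact h.mem_span_image_iff hW hPW htP hq inter_subset_right
      (fun hqT' => hqT (mem_inter.mp hqT').1)
  · rintro _ ⟨j, hj, rfl⟩
    exact hPW j (mem_inter.mp hj).2
  · rintro _ ⟨j, hj, rfl⟩
    exact hPW' j (mem_sdiff.mp hj).2

end IsMDSOn

end GeneralPosition

section CoordinateSubspaces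

variable (K : Type*) [Field K] {n : Type*}

def vanishingOn (I : Set n) : Submodule K (n → K) :=
  ⨅ i ∈ I, LinearMap.ker (LinearMap.proj i)

variable {K}

theorem mem_vanishingOn {I : Set n} {x : n → K} : x ∈ vanishingOn K I ↔ ∀ i ∈ I, x i = 0 := by
  simp [vanishingOn]

theorem disjoint_vanishingOn_compl (I : Set n) :
    Disjoint (vanishingOn K Iᶜ) (vanishingOn K I) := by
  rw [disjoint_def]
  intro x hxc hx
  funext i
  by_cases hi : i ∈ I
  · exact mem_vanishingOn.mp hx i hi
  · exact mem_vanishingOn.mp hxc i hi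

theorem finrank_vanishingOn_compl [Fintype n] (I : Set n) :
    finrank K (vanishingOn K Iᶜ) = Nat.card I := by
  rw [vanishingOn, (LinearMap.iInfKerProjEquiv K (fun _ : n => K) (I := I) disjoint_compl_right
    (by simp)).finrank_eq, finrank_fintype_fun_eq_card, Nat.card_eq_fintype_card]

end CoordinateSubspaces

theorem card_filter_powerset_card_inter {α : Type*} [DecidableEq α] {U P : Finset α}
    (hPU : P ⊆ U) (s j : ℕ) :
    #{S ∈ U.powerset | #S = s ∧ #(S ∩ P) = j} =
      if j ≤ s then (#P).choose j * (#(U \ P)).choose (s - j) else 0 := by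
  split_ifs with hjs
  · rw [← card_powersetCard j P, ← card_powersetCard (s - j) (U \ P), ← card_product]
    refine card_nbij' (fun S => (S ∩ P, S \ P)) (fun p => p.1 ∪ p.2) ?_ ?_ ?_ ?_
    · intro S hS
      simp only [mem_coe, mem_filter, mem_powerset, mem_product, mem_powersetCard] at hS ⊢
      obtain ⟨hSU, rfl, rfl⟩ := hS
      refine ⟨⟨inter_subset_right, rfl⟩, sdiff_subset_sdiff hSU subset_rfl, ?_⟩
      have := card_sdiff_add_card_inter S P
      omega
    · rintro ⟨A, B⟩ hAB
      simp only [mem_coe, mem_filter, mem_powerset, mem_product, mem_powersetCard] at hAB ⊢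
      obtain ⟨⟨hAP, rfl⟩, hBU, hB⟩ := hAB
      have hAB : Disjoint A B := disjoint_of_subset_left hAP (subset_sdiff.mp hBU).2.symm
      refine ⟨union_subset (hAP.trans hPU) (hBU.trans sdiff_subset), ?_, ?_⟩
      · rw [card_union_of_disjoint hAB, hB]; omega
      · congr 1
        grind
    · intro S _
      exact (union_comm _ _).trans (sdiff_union_inter S P)
    · rintro ⟨A, B⟩ hAB
      simp only [mem_coe, mem_product, mem_powersetCard] at hAB
      obtain ⟨⟨hAP, -⟩, hBU, -⟩ := hAB
      refine Prod.ext ?_ ?_ <;> ext x <;> grind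
  · rw [card_eq_zero, filter_eq_empty_iff]
    rintro S - ⟨rfl, rfl⟩
    exact hjs (card_le_card inter_subset_left)

theorem card_filter_notMem_card_inter_mem {α : Type*} [Fintype α] [DecidableEq α]
    {P : Finset α} {q : α} (hq : q ∈ P) (s : ℕ) (I : Finset ℕ) :
    #{S : Finset α | q ∉ S ∧ #S = s ∧ #(S ∩ P) ∈ I} =
      ∑ j ∈ I, if j ≤ s then (#P - 1).choose j * (Fintype.card α - #P).choose (s - j) else 0 := by
  have hsub : P.erase q ⊆ univ.erase q := erase_subset_erase q (subset_univ P)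
  have hinter : ∀ S : Finset α, q ∉ S → #(S ∩ P.erase q) = #(S ∩ P) := fun S hqS => by
    rw [inter_erase, erase_eq_of_notMem (fun h => hqS (mem_inter.mp h).1)]
  have hQ : #(univ.erase q \ P.erase q) = Fintype.card α - #P := by
    rw [card_sdiff_of_subset hsub, card_erase_of_mem hq, card_erase_of_mem (mem_univ q),
      card_univ]
    have hPα := card_le_univ P
    have hP := card_pos.mpr ⟨q, hq⟩
    omega
  have hset : ({S : Finset α | q ∉ S ∧ #S = s ∧ #(S ∩ P) ∈ I} : Finset (Finset α)) =
      {S ∈ (univ.erase q).powerset | #S = s ∧ #(S ∩ P.erase q) ∈ I} := by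
    ext S
    simp only [mem_filter, mem_univ, true_and, mem_powerset, subset_erase, subset_univ]
    constructor
    · rintro ⟨hqS, hs, hS⟩
      exact ⟨hqS, hs, hinter S hqS ▸ hS⟩
    · rintro ⟨hqS, hs, hS⟩
      exact ⟨hqS, hs, hinter S hqS ▸ hS⟩
  rw [hset, card_eq_sum_card_fiberwise (f := fun S => #(S ∩ P.erase q))
    fun S hS => (mem_filter.mp hS).2.2]
  refine sum_congr rfl fun j hj => ?_
  rw [← card_erase_of_mem hq, ← hQ, ← card_filter_powerset_card_inter hsub, filter_filter]
  congr 1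
  refine filter_congr fun S _ => ?_
  constructor
  · rintro ⟨⟨hs, -⟩, hSj⟩
    exact ⟨hs, hSj⟩
  · rintro ⟨hs, hSj⟩
    exact ⟨⟨hs, hSj ▸ hj⟩, hSj⟩

section BlockMDS

variable {F : Type*} [Field F] {n ι κ : Type*} [Fintype n] [Fintype ι] [DecidableEq κ]

theorem notMem_span_columns_iff {t ℓ : ℕ} (htℓ : t ≤ ℓ) (A : Matrix n ι F)
    (seg : ι → Option κ) (rb : n → κ) (c : κ)
    (hseg : #{j | seg j = some c} = ℓ) (hrb : #{i | rb i = c} = t)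
    (hzero : ∀ j, seg j = none → ∀ i, A i j = 0)
    (hblock : ∀ j c, seg j = some c → ∀ i, rb i ≠ c → A i j = 0)
    (hMDS : ∀ J : Finset ι, (∀ j ∈ J, seg j = some c) → #J = t →
      LinearIndependent F (fun j : {j // j ∈ J} => fun i => A i j.1))
    {q : ι} (hq : seg q = some c) {S : Finset ι} (hqS : q ∉ S) :
    (fun i => A i q) ∉ span F ((fun j i => A i j) '' {j | j ∉ S ∧ j ≠ q}) ↔
      ℓ - t ≤ #{j ∈ S | seg j = some c} ∧ #{j ∈ S | seg j = some c} ≤ ℓ - 1 := by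
  set P : Finset ι := {j | seg j = some c}
  have hmds : IsMDSOn F (fun j i => A i j) P t :=
    fun J hJ hJt => hMDS J (fun j hj => by simpa [P] using hJ hj) hJt
  have hW : finrank F (vanishingOn F {i | rb i = c}ᶜ) ≤ t := by
    rw [finrank_vanishingOn_compl, ← hrb, Nat.card_eq_fintype_card, Fintype.card_subtype]
    rfl
  have hPW : ∀ j ∈ P, (fun i => A i j) ∈ vanishingOn F {i | rb i = c}ᶜ := fun j hj =>
    mem_vanishingOn.mpr fun i hi => hblock j c (by simpa [P] using hj) i hi
  have hPW' : ∀ j ∉ P, (fun i => A i j) ∈ vanishingOn F {i | rb i = c} := by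
    intro j hj
    refine mem_vanishingOn.mpr fun i hi => ?_
    rcases hsegj : seg j with _ | c'
    · exact hzero j hsegj i
    · have hi' : rb i = c := hi
      exact hblock j c' hsegj i fun hc' => hj (by simp [P, hsegj, ← hc', hi'])
  have hT : {j | j ∉ S ∧ j ≠ q} = ↑(Sᶜ.erase q) := by
    ext
    simp [and_comm]
  have hcard : #(Sᶜ.erase q ∩ P) + #{j ∈ S | seg j = some c} + 1 = ℓ := by
    have hfilter : {j ∈ S | seg j = some c} = P ∩ S := by
      ext
      simp [P, and_comm]
    have havail : Sᶜ.erase q ∩ P = (P \ S).erase q := by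
      ext
      simp [and_comm]
    rw [hfilter, havail, add_right_comm, card_erase_add_one (by simp [P, hq, hqS]),
      card_sdiff_add_card_inter, hseg]
  rw [hT, hmds.mem_span_image_iff_le_card_inter (disjoint_vanishingOn_compl _) hW hPW hPW'
    (hseg ▸ htℓ) (by simp [P, hq]) (by simp)]
  omega

end BlockMDS

theorem stmt_8_general {F : Type*} [Field F] {k t ℓ m : ℕ}
    (htℓ : t ≤ ℓ)
    (A : Matrix (Fin (k * t)) (Fin m) F)
    (seg : Fin m → Option (Fin k)) (rb : Fin (k * t) → Fin k)
    (hseg : ∀ c : Fin k, (Finset.univ.filter fun j => seg j = some c).card = ℓ)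
    (hrb : ∀ c : Fin k, (Finset.univ.filter fun i => rb i = c).card = t)
    (hzero : ∀ j, seg j = none → ∀ i, A i j = 0)
    (hblock : ∀ j c, seg j = some c → ∀ i, rb i ≠ c → A i j = 0)
    (hMDS : ∀ c : Fin k, ∀ J : Finset (Fin m), (∀ j ∈ J, seg j = some c) → J.card = t →
      LinearIndependent F (fun j : {j // j ∈ J} => fun i => A i j.1))
    (s : ℕ)
    (q : Fin m) (c : Fin k) (hq : seg q = some c) :
    (∀ S : Finset (Fin m), q ∉ S → S.card = s →
        ((fun i => A i q) ∉
            Submodule.span F ((fun j i => A i j) '' {j : Fin m | j ∉ S ∧ j ≠ q}) ↔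
          ℓ - t ≤ (S.filter fun j => seg j = some c).card ∧
            (S.filter fun j => seg j = some c).card ≤ ℓ - 1)) ∧
      (Finset.univ.filter fun S : Finset (Fin m) => q ∉ S ∧ S.card = s ∧
          (fun i => A i q) ∉
            Submodule.span F ((fun j i => A i j) '' {j : Fin m | j ∉ S ∧ j ≠ q})).card
        = ∑ j ∈ Finset.Icc (ℓ - t) (ℓ - 1),
            if j ≤ s then (ℓ - 1).choose j * (m - ℓ).choose (s - j) else 0 := by
  have hdec := fun (S : Finset (Fin m)) (hqS : q ∉ S) =>
    notMem_span_columns_iff htℓ A seg rb c (hseg c) (hrb c) hzero hblock (hMDS c) hq hqS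
  refine ⟨fun S hqS _ => hdec S hqS, ?_⟩
  set P : Finset (Fin m) := {j | seg j = some c}
  have hfilter : ∀ S : Finset (Fin m), {j ∈ S | seg j = some c} = S ∩ P := fun S => by
    ext
    simp [P]
  have hqP : q ∈ P := by simp [P, hq]
  have hcount := card_filter_notMem_card_inter_mem hqP s (Icc (ℓ - t) (ℓ - 1))
  rw [hseg c, Fintype.card_fin] at hcount
  rw [← hcount]
  congr 1
  refine filter_congr fun S _ => and_congr_right fun hqS => and_congr_right fun _ => ?_
  rw [hdec S hqS, hfilter, mem_Icc]

/-- Fix a request `q` whose column in the block-MDS base matrix is nonzero, lying in a segment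
of `ℓ` columns carrying an MDS block of rank `t = T/k`. Then `(q,S)` with `|S| = s`, `q ∉ S`
is decodable iff the number `j` of elements of `S` in `q`'s segment satisfies
`ℓ - t ≤ j ≤ ℓ - 1`; consequently the number of such `S` equals
`∑_{j=ℓ-t}^{ℓ-1} C(ℓ-1,j) C(m-ℓ, s-j)`. -/
theorem stmt_8 {F : Type*} [Field F] {k t ℓ m : ℕ}
    (ht : 1 ≤ t) (htℓ : t ≤ ℓ) (hkl : k * ℓ ≤ m)
    (A : Matrix (Fin (k * t)) (Fin m) F)
    (seg : Fin m → Option (Fin k)) (rb : Fin (k * t) → Fin k)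
    (hseg : ∀ c : Fin k, (Finset.univ.filter fun j => seg j = some c).card = ℓ)
    (hrb : ∀ c : Fin k, (Finset.univ.filter fun i => rb i = c).card = t)
    (hzero : ∀ j, seg j = none → ∀ i, A i j = 0)
    (hblock : ∀ j c, seg j = some c → ∀ i, rb i ≠ c → A i j = 0)
    (hMDS : ∀ c : Fin k, ∀ J : Finset (Fin m), (∀ j ∈ J, seg j = some c) → J.card = t →
      LinearIndependent F (fun j : {j // j ∈ J} => fun i => A i j.1))
    (s : ℕ) (hs2 : s ≤ m - 1)
    (q : Fin m) (c : Fin k) (hq : seg q = some c) :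
    (∀ S : Finset (Fin m), q ∉ S → S.card = s →
        ((fun i => A i q) ∉
            Submodule.span F ((fun j i => A i j) '' {j : Fin m | j ∉ S ∧ j ≠ q}) ↔
          ℓ - t ≤ (S.filter fun j => seg j = some c).card ∧
            (S.filter fun j => seg j = some c).card ≤ ℓ - 1)) ∧
      (Finset.univ.filter fun S : Finset (Fin m) => q ∉ S ∧ S.card = s ∧
          (fun i => A i q) ∉
            Submodule.span F ((fun j i => A i j) '' {j : Fin m | j ∉ S ∧ j ≠ q})).card
        = ∑ j ∈ Finset.Icc (ℓ - t) (ℓ - 1),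
            if j ≤ s then (ℓ - 1).choose j * (m - ℓ).choose (s - j) else 0 :=
  stmt_8_general htℓ A seg rb hseg hrb hzero hblock hMDS s q c hq
end

section
/- Let A^base be the matrix with k = T segments, each segment being a single row with ℓ nonzero entries (i.e., A_b is a 1×ℓ row vector of nonzero field elements), segments occupying disjoint rows and disjoint column sets, remaining m − Tℓ columns zero. Suppose Tℓ ≤ m and ℓ − 1 ≤ s. Then for any pair (q,S) with |S| = s that is decodable in some column permutation of A^base, the number of column permutations σ of A^base (counted as distinct assignments of the Tℓ nonzero column positions, where permutations within a segment yielding the same matrix structure are identified) such that (q,S) is decodable in σ(A^base) equals T · C(s, ℓ−1) · M, where M is the multinomial coefficient counting the ways to choose k−1 = T−1 disjoint ℓ-subsets from the remaining m − ℓ columns, i.e., M = (m−ℓ)! / ((ℓ!)^{T−1} (m − ℓ − (T−1)ℓ)!); in particular this count is independent of the choice of (q,S). -/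
open Finset
open scoped Classical

section AuxGood

variable {α : Type*} [Fintype α] [DecidableEq α]

noncomputable def Good (ℓ k : ℕ) (A : Finset α) : Finset (α → Option (Fin k)) :=
  Finset.univ.filter fun σ =>
    (∀ a : α, σ a ≠ none → a ∈ A) ∧
      ∀ j : Fin k, (Finset.univ.filter fun c => σ c = some j).card = ℓ

lemma good_zero (ℓ : ℕ) (A : Finset α) : Good ℓ 0 A = {fun _ => none} := by
  ext σ
  simp only [Good, mem_filter, mem_univ, true_and, mem_singleton]
  constructor
  · intro _
    funext a
    cases h : σ a with
    | none => rfl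
    | some j => exact j.elim0
  · rintro rfl
    exact ⟨fun a h => absurd rfl h, fun j => j.elim0⟩

lemma card_fiber (ℓ k : ℕ) (j : Fin (k + 1)) (A B : Finset α) (hBA : B ⊆ A)
    (hB : B.card = ℓ) :
    (Finset.univ.filter fun σ : α → Option (Fin (k + 1)) =>
        ((∀ a : α, σ a ≠ none → a ∈ A) ∧
          ∀ i : Fin (k + 1), (Finset.univ.filter fun c => σ c = some i).card = ℓ) ∧
          (Finset.univ.filter fun c => σ c = some j) = B).card
      = (Good ℓ k (A \ B)).card := by
  apply Finset.card_bij'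
    (i := fun σ _ => fun c => (σ c).bind (finSuccEquiv' j))
    (j := fun τ _ => fun c => if c ∈ B then some j else (τ c).map j.succAbove)
  · -- forward maps into Good
    intro σ hσ
    simp only [mem_filter, mem_univ, true_and] at hσ
    obtain ⟨⟨hsupp, hfib⟩, hfj⟩ := hσ
    have hmemB : ∀ c, c ∈ B ↔ σ c = some j := by
      intro c
      rw [← hfj]; simp
    have key : ∀ c (i : Fin k), (σ c).bind (finSuccEquiv' j) = some i ↔
        σ c = some (j.succAbove i) := by
      intro c i
      cases h : σ c with
      | none => simp
      | some i' =>
        simp only [Option.bind_some]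
        constructor
        · intro h2
          have := (finSuccEquiv' j).symm_apply_apply i'
          rw [h2] at this
          rw [finSuccEquiv'_symm_some] at this
          rw [this]
        · rintro h2
          have : i' = j.succAbove i := by simpa using h2
          rw [this, finSuccEquiv'_succAbove]
    simp only [Good, mem_filter, mem_univ, true_and]
    constructor
    · intro a ha
      cases h : σ a with
      | none => rw [h] at ha; simp at ha
      | some i' =>
        rcases Option.ne_none_iff_exists'.mp ha with ⟨i, hi⟩
        rw [key a i] at hi
        rw [mem_sdiff]
        refine ⟨hsupp a (by rw [hi]; simp), ?_⟩
        rw [hmemB, hi]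
        simp only [Option.some.injEq]
        exact (Fin.succAbove_ne j i)
    · intro i
      rw [← hfib (j.succAbove i)]
      congr 1
      ext c
      simp [key c i]
  · -- backward maps into the fiber set
    intro τ hτ
    simp only [Good, mem_filter, mem_univ, true_and] at hτ
    obtain ⟨hsupp, hfib⟩ := hτ
    have hnB : ∀ c, τ c ≠ none → c ∉ B := by
      intro c hc hcB
      have := hsupp c hc
      rw [mem_sdiff] at this
      exact this.2 hcB
    have hfj : (Finset.univ.filter fun c =>
        (if c ∈ B then some j else (τ c).map j.succAbove) = some j) = B := by
      ext c
      simp only [mem_filter, mem_univ, true_and]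
      by_cases hc : c ∈ B
      · simp [hc]
      · simp only [hc, if_false, iff_false]
        intro h
        rcases Option.map_eq_some_iff.mp h with ⟨i, _, hi⟩
        exact Fin.succAbove_ne j i hi
    simp only [mem_filter, mem_univ, true_and]
    refine ⟨⟨?_, ?_⟩, hfj⟩
    · intro a ha
      by_cases hc : a ∈ B
      · exact hBA hc
      · simp only [hc, if_false] at ha
        have : τ a ≠ none := by
          intro h; rw [h] at ha; simp at ha
        exact (mem_sdiff.mp (hsupp a this)).1
    · intro i
      rcases eq_or_ne i j with rfl | hij
      · rw [hfj, hB]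
      · obtain ⟨i', rfl⟩ := Fin.exists_succAbove_eq hij
        rw [← hfib i']
        congr 1
        ext c
        simp only [mem_filter, mem_univ, true_and]
        by_cases hc : c ∈ B
        · simp only [hc, if_true, Option.some.injEq]
          constructor
          · intro h; exact absurd h.symm (Fin.succAbove_ne j i')
          · intro h
            exact absurd (hnB c (by rw [h]; simp) hc) (fun H => H)
        · simp only [hc, if_false]
          constructor
          · intro h
            rcases Option.map_eq_some_iff.mp h with ⟨i'', hi'', h2⟩
            have := Fin.succAbove_right_injective (p := j) h2
            rw [← this]; exact hi''
          · intro h; rw [h]; simp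
  · -- left inverse
    intro σ hσ
    simp only [mem_filter, mem_univ, true_and] at hσ
    obtain ⟨⟨hsupp, hfib⟩, hfj⟩ := hσ
    have hmemB : ∀ c, c ∈ B ↔ σ c = some j := by
      intro c; rw [← hfj]; simp
    funext c
    by_cases hc : c ∈ B
    · simp only [hc, if_true]
      exact ((hmemB c).mp hc).symm
    · simp only [hc, if_false]
      cases h : σ c with
      | none => simp [h]
      | some i' =>
        have hij : i' ≠ j := by
          intro h2; rw [h2] at h; exact hc ((hmemB c).mpr h)
        obtain ⟨i, rfl⟩ := Fin.exists_succAbove_eq hij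
        simp [h, finSuccEquiv'_succAbove]
  · -- right inverse
    intro τ hτ
    simp only [Good, mem_filter, mem_univ, true_and] at hτ
    obtain ⟨hsupp, hfib⟩ := hτ
    funext c
    by_cases hc : c ∈ B
    · simp only [hc, if_true, Option.bind_some, finSuccEquiv'_at]
      cases h : τ c with
      | none => rfl
      | some i =>
        have : c ∈ A \ B := hsupp c (by rw [h]; simp)
        exact absurd hc (mem_sdiff.mp this).2
    · simp only [hc, if_false]
      cases h : τ c with
      | none => simp
      | some i => simp [finSuccEquiv'_succAbove]

lemma good_succ (ℓ k : ℕ) (A : Finset α) :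
    (Good ℓ (k + 1) A).card = ∑ B ∈ A.powersetCard ℓ, (Good ℓ k (A \ B)).card := by
  have hmem : ∀ σ ∈ Good ℓ (k + 1) A,
      (Finset.univ.filter fun c => σ c = some (Fin.last k)) ∈ A.powersetCard ℓ := by
    intro σ hσ
    simp only [Good, mem_filter, mem_univ, true_and] at hσ
    rw [mem_powersetCard]
    constructor
    · intro c hc
      simp only [mem_filter, mem_univ, true_and] at hc
      exact hσ.1 c (by rw [hc]; simp)
    · exact hσ.2 _
  rw [Finset.card_eq_sum_card_fiberwise hmem]
  refine Finset.sum_congr rfl fun B hB => ?_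
  rw [mem_powersetCard] at hB
  rw [← card_fiber ℓ k (Fin.last k) A B hB.1 hB.2]
  congr 1
  rw [Good, Finset.filter_filter]

lemma good_card (ℓ k : ℕ) (A : Finset α) (h : k * ℓ ≤ A.card) :
    (Good ℓ k A).card * (ℓ.factorial ^ k * (A.card - k * ℓ).factorial)
      = A.card.factorial := by
  induction k generalizing A with
  | zero => simp [good_zero]
  | succ k ih =>
    have hexp : (k + 1) * ℓ = k * ℓ + ℓ := by ring
    have hℓA : ℓ ≤ A.card := by omega
    rw [good_succ, Finset.sum_mul]
    have hterm : ∀ B ∈ A.powersetCard ℓ,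
        (Good ℓ k (A \ B)).card * (ℓ.factorial ^ (k + 1) * (A.card - (k + 1) * ℓ).factorial)
          = (A.card - ℓ).factorial * ℓ.factorial := by
      intro B hB
      rw [mem_powersetCard] at hB
      have hcard : (A \ B).card = A.card - ℓ := by
        rw [card_sdiff_of_subset hB.1, hB.2]
      have hk : k * ℓ ≤ (A \ B).card := by omega
      have hsub : A.card - (k + 1) * ℓ = (A \ B).card - k * ℓ := by omega
      have : ℓ.factorial ^ (k + 1) * (A.card - (k + 1) * ℓ).factorial
          = (ℓ.factorial ^ k * ((A \ B).card - k * ℓ).factorial) * ℓ.factorial := by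
        rw [hsub, pow_succ]; ring
      rw [this, ← mul_assoc, ih (A \ B) hk, hcard]
    rw [Finset.sum_congr rfl hterm, Finset.sum_const, Finset.card_powersetCard,
      smul_eq_mul, mul_comm ((A.card - ℓ).factorial) _, ← mul_assoc]
    exact Nat.choose_mul_factorial_mul_factorial hℓA

end AuxGood

/-- For the single-row-per-segment base matrix (column permutations modeled as segment
assignments `σ : [m] → Option [T]` with each segment of size `ℓ`), and any pair `(q,S)` with
`|S| = s`, `ℓ - 1 ≤ s`, the number of assignments for which `(q,S)` is decodable (i.e. `q` gets
a segment whose other `ℓ-1` columns all lie in `S`) is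
`T · C(s, ℓ-1) · (m-ℓ)! / (ℓ!^{T-1} (m-Tℓ)!)`, independently of `(q,S)`. -/
theorem stmt_15 (m T ℓ s : ℕ) (hT : 1 ≤ T) (hℓ : 1 ≤ ℓ) (hml : T * ℓ ≤ m)
    (hs : ℓ - 1 ≤ s) (q : Fin m) (S : Finset (Fin m)) (hq : q ∉ S) (hS : S.card = s) :
    ((Finset.univ : Finset (Fin m → Option (Fin T))).filter fun σ =>
        (∀ j : Fin T, (Finset.univ.filter fun c => σ c = some j).card = ℓ) ∧
          ∃ j : Fin T, σ q = some j ∧ ∀ c, σ c = some j → c ≠ q → c ∈ S).card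
      = T * s.choose (ℓ - 1) *
          ((m - ℓ).factorial / (ℓ.factorial ^ (T - 1) * (m - T * ℓ).factorial)) := by
  obtain ⟨T', rfl⟩ : ∃ T', T = T' + 1 := ⟨T - 1, by omega⟩
  have hexp : (T' + 1) * ℓ = T' * ℓ + ℓ := by ring
  have hTm : T' * ℓ ≤ m - ℓ := by omega
  have hsub2 : m - ℓ - T' * ℓ = m - (T' + 1) * ℓ := by omega
  set d : Fin (T' + 1) := ⟨0, Nat.succ_pos T'⟩ with hd
  set K : ℕ := (m - ℓ).factorial / (ℓ.factorial ^ T' * (m - (T' + 1) * ℓ).factorial) with hK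
  set φ : (Fin m → Option (Fin (T' + 1))) → Fin (T' + 1) × Finset (Fin m) :=
    fun σ => ((σ q).getD d,
      (Finset.univ.filter fun c => σ c = some ((σ q).getD d)).erase q) with hφ
  clear_value d K φ
  have hmem : ∀ σ ∈ (Finset.univ : Finset (Fin m → Option (Fin (T' + 1)))).filter fun σ =>
      (∀ j : Fin (T' + 1), (Finset.univ.filter fun c => σ c = some j).card = ℓ) ∧
        ∃ j : Fin (T' + 1), σ q = some j ∧ ∀ c, σ c = some j → c ≠ q → c ∈ S,
      φ σ ∈ (Finset.univ : Finset (Fin (T' + 1))) ×ˢ S.powersetCard (ℓ - 1) := by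
    intro σ hσ
    simp only [mem_filter, mem_univ, true_and] at hσ
    obtain ⟨hfib, j, hj, hsub⟩ := hσ
    have hget : (σ q).getD d = j := by rw [hj]; rfl
    simp only [hφ]
    rw [mem_product]
    refine ⟨mem_univ _, mem_powersetCard.mpr ⟨?_, ?_⟩⟩
    · intro c hc
      rw [mem_erase, mem_filter] at hc
      exact hsub c (by rw [← hget]; exact hc.2.2) hc.1
    · have hqmem : q ∈ Finset.univ.filter fun c => σ c = some ((σ q).getD d) := by
        rw [mem_filter, hget]
        exact ⟨mem_univ _, hj⟩
      rw [card_erase_of_mem hqmem, hget, hfib j]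
  rw [Finset.card_eq_sum_card_fiberwise hmem]
  have hfibeq : ∀ p ∈ (Finset.univ : Finset (Fin (T' + 1))) ×ˢ S.powersetCard (ℓ - 1),
      ((((Finset.univ : Finset (Fin m → Option (Fin (T' + 1)))).filter fun σ =>
        (∀ j : Fin (T' + 1), (Finset.univ.filter fun c => σ c = some j).card = ℓ) ∧
          ∃ j : Fin (T' + 1), σ q = some j ∧ ∀ c, σ c = some j → c ≠ q → c ∈ S).filter
        fun σ => φ σ = p)).card = K := by
    rintro ⟨j, U⟩ hp
    rw [mem_product, mem_powersetCard] at hp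
    obtain ⟨-, hU1, hU2⟩ := hp
    have hqU : q ∉ U := fun h => hq (hU1 h)
    have hcard : (insert q U).card = ℓ := by
      rw [card_insert_of_notMem hqU, hU2]; omega
    have hset : (((Finset.univ : Finset (Fin m → Option (Fin (T' + 1)))).filter fun σ =>
        (∀ j : Fin (T' + 1), (Finset.univ.filter fun c => σ c = some j).card = ℓ) ∧
          ∃ j : Fin (T' + 1), σ q = some j ∧ ∀ c, σ c = some j → c ≠ q → c ∈ S).filter
        fun σ => φ σ = (j, U))
        = Finset.univ.filter fun σ : Fin m → Option (Fin (T' + 1)) =>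
          ((∀ a, σ a ≠ none → a ∈ (Finset.univ : Finset (Fin m))) ∧
            ∀ i : Fin (T' + 1), (Finset.univ.filter fun c => σ c = some i).card = ℓ) ∧
            (Finset.univ.filter fun c => σ c = some j) = insert q U := by
      rw [Finset.filter_filter]
      ext σ
      simp only [mem_filter, mem_univ, true_and]
      constructor
      · rintro ⟨⟨hfib, j', hj', hsub⟩, hφσ⟩
        have hget : (σ q).getD d = j' := by rw [hj']; rfl
        have hj'' : j' = j := by
          have := congrArg Prod.fst hφσ
          simpa [hφ, hget] using this
        subst hj''
        refine ⟨⟨fun _ _ => trivial, hfib⟩, ?_⟩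
        have hU : (Finset.univ.filter fun c => σ c = some j').erase q = U := by
          have := congrArg Prod.snd hφσ
          simpa [hφ, hget] using this
        have hqmem : q ∈ Finset.univ.filter fun c => σ c = some j' := by
          rw [mem_filter]; exact ⟨mem_univ _, hj'⟩
        rw [← hU, insert_erase hqmem]
      · rintro ⟨⟨-, hfib⟩, hfj⟩
        have hjq : σ q = some j := by
          have : q ∈ Finset.univ.filter fun c => σ c = some j := by
            rw [hfj]; exact mem_insert_self _ _
          exact (mem_filter.mp this).2
        have hget : (σ q).getD d = j := by rw [hjq]; rfl
        refine ⟨⟨hfib, j, hjq, ?_⟩, ?_⟩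
        · intro c hc hcq
          have : c ∈ insert q U := by rw [← hfj, mem_filter]; exact ⟨mem_univ _, hc⟩
          rcases mem_insert.mp this with h | h
          · exact absurd h hcq
          · exact hU1 h
        · simp only [hφ, hget, hfj, Prod.mk.injEq]
          exact ⟨trivial, erase_insert hqU⟩
    have hcf := card_fiber ℓ T' j Finset.univ (insert q U) (subset_univ _) hcard
    rw [hset]
    have hAcard : ((Finset.univ : Finset (Fin m)) \ insert q U).card = m - ℓ := by
      rw [card_sdiff_of_subset (subset_univ _), card_univ, Fintype.card_fin, hcard]
    have hgc := good_card ℓ T' ((Finset.univ : Finset (Fin m)) \ insert q U)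
      (by rw [hAcard]; exact hTm)
    rw [hAcard] at hgc
    rw [hsub2] at hgc
    have hpos : 0 < ℓ.factorial ^ T' * (m - (T' + 1) * ℓ).factorial :=
      Nat.mul_pos (Nat.pow_pos (Nat.factorial_pos _)) (Nat.factorial_pos _)
    have hGK : (Good ℓ T' ((Finset.univ : Finset (Fin m)) \ insert q U)).card = K := by
      rw [hK]
      exact (Nat.div_eq_of_eq_mul_left hpos hgc.symm).symm
    rw [← hGK, ← hcf]
    congr 1
    congr!
  rw [Finset.sum_congr rfl hfibeq, Finset.sum_const, Finset.card_product, card_univ,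
    Fintype.card_fin, Finset.card_powersetCard, hS, smul_eq_mul]
  simp only [Nat.add_sub_cancel, hK]
end

section
/- For T = k (each segment is one row of ℓ nonzero entries, rest zeros) with Tℓ ≤ m and ℓ − 1 ≤ s ≤ m−1, the number of decodable pairs (q, S) with |S| = s in A^base equals Tℓ · C(m − ℓ, s − ℓ + 1). -/
open Finset
open scoped Classical

/-
Within segment `i₀` all columns are supported on row `i₀` alone, hence proportional; so a
column of segment `i₀` lies in the span of a set of columns iff that set meets segment `i₀`
(projecting onto row `i₀` gives the converse), while zero columns lie in every span. Thus
`(q, S)` is decodable iff `q` lies in a segment whose other `ℓ - 1` columns are in `S`, and for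
each of the `Tℓ` nonzero columns such an `S` is those `ℓ - 1` columns together with any
`s - (ℓ - 1)` of the `m - ℓ` columns outside the segment.
-/

theorem card_filter_univ_prod {α β : Type*} [Fintype α] [Fintype β] (P : α × β → Prop)
    [DecidablePred P] :
    #{p : α × β | P p} = ∑ a, #{b : β | P (a, b)} := by
  simp only [card_filter, Fintype.sum_prod_type]

theorem card_filter_notMem_subset_erase {α : Type*} [Fintype α] [DecidableEq α]
    {K : Finset α} {q : α} (hq : q ∈ K) {s : ℕ} (hs : #K - 1 ≤ s) :
    #{S : Finset α | q ∉ S ∧ #S = s ∧ K.erase q ⊆ S}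
      = (Fintype.card α - #K).choose (s - (#K - 1)) := by
  have hfilter : ({S : Finset α | q ∉ S ∧ #S = s ∧ K.erase q ⊆ S} : Finset (Finset α))
      = {S ∈ (univ.erase q).powersetCard s | K.erase q ⊆ S} := by
    ext S
    simp [subset_erase, and_assoc]
  have hK : 1 ≤ #K := card_pos.2 ⟨q, hq⟩
  rw [hfilter, card_filter_powersetCard_subset _ _ _ (erase_subset_erase q (subset_univ K))
    (by rwa [card_erase_of_mem hq]), card_erase_of_mem hq, card_erase_of_mem (mem_univ q),
    card_univ]
  congr 1
  omega

section Columns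

variable {ι κ F : Type*} [Field F] {A : Matrix ι κ F} {seg : κ → Option ι}

theorem entry_eq_zero_of_seg_ne (hA : ∀ i j, A i j ≠ 0 ↔ seg j = some i) {i : ι} {j : κ}
    (h : seg j ≠ some i) : A i j = 0 :=
  not_not.mp (mt (hA i j).1 h)

theorem col_eq_zero_of_seg_eq_none (hA : ∀ i j, A i j ≠ 0 ↔ seg j = some i) {q : κ}
    (hq : seg q = none) : (fun i => A i q) = 0 :=
  funext fun _ => entry_eq_zero_of_seg_ne hA (by simp [hq])

theorem col_mem_span_cols_iff (hA : ∀ i j, A i j ≠ 0 ↔ seg j = some i) {q : κ} {i₀ : ι}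
    (hq : seg q = some i₀) (X : Set κ) :
    (fun i => A i q) ∈ Submodule.span F ((fun j i => A i j) '' X) ↔
      ∃ c ∈ X, seg c = some i₀ := by
  constructor
  · intro hmem
    by_contra! hX
    have hle :
        Submodule.span F ((fun j i => A i j) '' X) ≤ LinearMap.ker (LinearMap.proj i₀) := by
      rw [Submodule.span_le]
      rintro _ ⟨c, hc, rfl⟩
      exact entry_eq_zero_of_seg_ne hA (hX c hc)
    exact (hA i₀ q).2 hq (hle hmem)
  · rintro ⟨c, hc, hci₀⟩
    have hcol : (fun i => A i q) = (A i₀ q / A i₀ c) • fun i => A i c := by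
      funext i
      by_cases hi : i = i₀
      · subst hi
        simp [div_mul_cancel₀ _ ((hA i c).2 hci₀)]
      · have hne : ∀ j, seg j = some i₀ → seg j ≠ some i := fun j hj => by
          simpa [hj] using Ne.symm hi
        simp [entry_eq_zero_of_seg_ne hA (hne q hq), entry_eq_zero_of_seg_ne hA (hne c hci₀)]
    rw [hcol]
    exact Submodule.smul_mem _ _ (Submodule.subset_span ⟨c, hc, rfl⟩)

variable [Fintype κ] [DecidableEq κ]

theorem col_notMem_span_other_cols_iff [DecidableEq ι]
    (hA : ∀ i j, A i j ≠ 0 ↔ seg j = some i) (q : κ) (S : Finset κ) :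
    (fun i => A i q) ∉ Submodule.span F ((fun j i => A i j) '' {j | j ∉ S ∧ j ≠ q}) ↔
      ∃ i₀, seg q = some i₀ ∧ ({c | seg c = some i₀} : Finset κ).erase q ⊆ S := by
  cases hq : seg q with
  | none =>
    simp [col_eq_zero_of_seg_eq_none hA hq]
  | some i₀ =>
    rw [col_mem_span_cols_iff hA hq]
    simp only [Set.mem_ofPred_eq, not_exists, not_and, Option.some.injEq, exists_eq_left',
      subset_iff, mem_erase, mem_filter, mem_univ, true_and]
    exact forall_congr' fun c => by tauto

theorem card_filter_col_notMem_span_of_seg_eq_none (hA : ∀ i j, A i j ≠ 0 ↔ seg j = some i)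
    (s : ℕ) {q : κ} (hq : seg q = none) :
    #{S : Finset κ | q ∉ S ∧ #S = s ∧
      (fun i => A i q) ∉ Submodule.span F ((fun j i => A i j) '' {j | j ∉ S ∧ j ≠ q})}
      = 0 := by
  simp [col_eq_zero_of_seg_eq_none hA hq]

theorem card_filter_col_notMem_span_of_seg_eq_some [DecidableEq ι]
    (hA : ∀ i j, A i j ≠ 0 ↔ seg j = some i) {ℓ s : ℕ} {q : κ} {i₀ : ι}
    (hq : seg q = some i₀) (hseg : #{c | seg c = some i₀} = ℓ) (hs : ℓ - 1 ≤ s) :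
    #{S : Finset κ | q ∉ S ∧ #S = s ∧
      (fun i => A i q) ∉ Submodule.span F ((fun j i => A i j) '' {j | j ∉ S ∧ j ≠ q})}
      = (Fintype.card κ - ℓ).choose (s - (ℓ - 1)) := by
  have hq_mem : q ∈ ({c | seg c = some i₀} : Finset κ) := by simpa using hq
  rw [← hseg, ← card_filter_notMem_subset_erase hq_mem (hseg ▸ hs)]
  refine congrArg card (filter_congr fun S _ => ?_)
  rw [col_notMem_span_other_cols_iff hA, hq]
  simp

end Columns

theorem stmt_17_general {F : Type*} [Field F] {T ℓ m : ℕ}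
    (A : Matrix (Fin T) (Fin m) F) (seg : Fin m → Option (Fin T))
    (hseg : ∀ j : Fin T, (Finset.univ.filter fun c => seg c = some j).card = ℓ)
    (hA : ∀ i j, A i j ≠ 0 ↔ seg j = some i)
    (s : ℕ) (hs1 : ℓ - 1 ≤ s) :
    ((Finset.univ : Finset (Fin m × Finset (Fin m))).filter fun p =>
        p.1 ∉ p.2 ∧ p.2.card = s ∧
          (fun i => A i p.1) ∉
            Submodule.span F
              ((fun j i => A i j) '' {j : Fin m | j ∉ p.2 ∧ j ≠ p.1})).card
      = T * ℓ * (m - ℓ).choose (s - (ℓ - 1)) := by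
  rw [card_filter_univ_prod]
  dsimp only
  rw [← sum_fiberwise univ seg, Fintype.sum_option,
    sum_eq_zero fun q hq => card_filter_col_notMem_span_of_seg_eq_none hA s (mem_filter.1 hq).2,
    zero_add, sum_congr rfl fun j _ => sum_congr rfl fun q hq =>
      card_filter_col_notMem_span_of_seg_eq_some hA (mem_filter.1 hq).2 (hseg j) hs1]
  simp only [sum_const, hseg, card_univ, Fintype.card_fin, smul_eq_mul, mul_assoc]

/-- For the single-row-per-segment base matrix (`T` disjoint column segments of size `ℓ`, the
columns of segment `j` nonzero exactly in row `j`, remaining `m - Tℓ` columns zero) and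
`ℓ - 1 ≤ s ≤ m - 1`, the number of decodable pairs `(q,S)` with `|S| = s` equals
`Tℓ · C(m-ℓ, s-ℓ+1)`. -/
theorem stmt_17 {F : Type*} [Field F] {T ℓ m : ℕ}
    (hℓ : 1 ≤ ℓ) (hml : T * ℓ ≤ m)
    (A : Matrix (Fin T) (Fin m) F) (seg : Fin m → Option (Fin T))
    (hseg : ∀ j : Fin T, (Finset.univ.filter fun c => seg c = some j).card = ℓ)
    (hA : ∀ i j, A i j ≠ 0 ↔ seg j = some i)
    (s : ℕ) (hs1 : ℓ - 1 ≤ s) (hs2 : s ≤ m - 1) :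
    ((Finset.univ : Finset (Fin m × Finset (Fin m))).filter fun p =>
        p.1 ∉ p.2 ∧ p.2.card = s ∧
          (fun i => A i p.1) ∉
            Submodule.span F
              ((fun j i => A i j) '' {j : Fin m | j ∉ p.2 ∧ j ≠ p.1})).card
      = T * ℓ * (m - ℓ).choose (s - (ℓ - 1)) :=
  stmt_17_general A seg hseg hA s hs1
end

section
/- For the single-row-per-segment matrix A^base (T segments of ℓ columns, Tℓ ≤ m), a set S ⊆ [m] with |S| = s and with segment-intersection sizes ℓ_1, …, ℓ_T (where ℓ_j = |S ∩ segment j|) satisfies: the number N(S) of requests q decodable with S equals #{ q : q in segment j with ℓ_j = ℓ − 1 and q ∉ S }, i.e., N(S) = |{ j ∈ [T] : ℓ_j = ℓ − 1 }|. -/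
open Finset
open scoped Classical

/-- For the single-row-per-segment base matrix, the number of requests `q` decodable with a
given side-information set `S` equals the number of segments `j` with
`|S ∩ segment j| = ℓ - 1`. -/
theorem stmt_18 {F : Type*} [Field F] {T ℓ m : ℕ}
    (hℓ : 1 ≤ ℓ) (hml : T * ℓ ≤ m)
    (A : Matrix (Fin T) (Fin m) F) (seg : Fin m → Option (Fin T))
    (hseg : ∀ j : Fin T, (Finset.univ.filter fun c => seg c = some j).card = ℓ)
    (hA : ∀ i j, A i j ≠ 0 ↔ seg j = some i)
    (S : Finset (Fin m)) :
    (Finset.univ.filter fun q : Fin m => q ∉ S ∧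
        (fun i => A i q) ∉
          Submodule.span F ((fun j i => A i j) '' {j : Fin m | j ∉ S ∧ j ≠ q})).card
      = (Finset.univ.filter fun j : Fin T =>
          (S.filter fun c => seg c = some j).card = ℓ - 1).card := by
  -- characterization of decodability
  have key : ∀ q : Fin m, (q ∉ S ∧
      (fun i => A i q) ∉
        Submodule.span F ((fun j i => A i j) '' {j : Fin m | j ∉ S ∧ j ≠ q}))
      ↔ ∃ t, seg q = some t ∧ q ∉ S ∧
          ∀ j', seg j' = some t → j' ≠ q → j' ∈ S := by
    intro q
    constructor
    · rintro ⟨hqS, hspan⟩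
      -- first, seg q must be some t
      rcases h : seg q with _ | t
      · exfalso
        apply hspan
        have : (fun i => A i q) = (0 : Fin T → F) := by
          funext i
          by_contra hne
          have := (hA i q).mp hne
          rw [h] at this
          exact Option.some_ne_none i this.symm
        rw [this]
        exact Submodule.zero_mem _
      · refine ⟨t, rfl, hqS, ?_⟩
        intro j' hj' hj'q
        by_contra hj'S
        apply hspan
        have hAtj' : A t j' ≠ 0 := (hA t j').mpr hj'
        have heq : (fun i => A i q) = (A t q * (A t j')⁻¹) • (fun i => A i j') := by
          funext i
          by_cases hit : i = t
          · subst hit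
            simp [smul_eq_mul]
            field_simp
          · have h1 : A i q = 0 := by
              by_contra hne
              have := (hA i q).mp hne
              rw [h] at this
              exact hit (Option.some.inj this).symm
            have h2 : A i j' = 0 := by
              by_contra hne
              have := (hA i j').mp hne
              rw [hj'] at this
              exact hit (Option.some.inj this).symm
            simp [h1, h2]
        rw [heq]
        exact Submodule.smul_mem _ _
          (Submodule.subset_span ⟨j', ⟨hj'S, hj'q⟩, rfl⟩)
    · rintro ⟨t, ht, hqS, hall⟩
      refine ⟨hqS, ?_⟩
      intro hmem
      have hle : Submodule.span F ((fun j i => A i j) '' {j : Fin m | j ∉ S ∧ j ≠ q})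
          ≤ LinearMap.ker (LinearMap.proj (R := F) (φ := fun _ : Fin T => F) t) := by
        rw [Submodule.span_le]
        rintro x ⟨j', ⟨hj'S, hj'q⟩, rfl⟩
        simp only [SetLike.mem_coe, LinearMap.mem_ker, LinearMap.proj_apply]
        by_contra hne
        have := (hA t j').mp hne
        exact hj'S (hall j' this hj'q)
      have := hle hmem
      simp only [LinearMap.mem_ker, LinearMap.proj_apply] at this
      exact (hA t q).mpr ht this
  -- rewrite LHS filter
  have hfilt : (Finset.univ.filter fun q : Fin m => q ∉ S ∧
        (fun i => A i q) ∉
          Submodule.span F ((fun j i => A i j) '' {j : Fin m | j ∉ S ∧ j ≠ q}))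
      = Finset.univ.filter fun q : Fin m => ∃ t, seg q = some t ∧ q ∉ S ∧
          ∀ j', seg j' = some t → j' ≠ q → j' ∈ S := by
    apply Finset.filter_congr
    intro q _
    exact iff_iff_eq.mp (key q) ▸ Iff.rfl
  rw [hfilt]
  -- counting lemma : S.filter card
  have hcard : ∀ t : Fin T, ∀ q : Fin m, seg q = some t → q ∉ S →
      (∀ j', seg j' = some t → j' ≠ q → j' ∈ S) →
      (S.filter fun c => seg c = some t).card = ℓ - 1 := by
    intro t q hq hqS hall
    have hsplit := Finset.card_filter_add_card_filter_not
      (s := Finset.univ.filter fun c => seg c = some t) (p := fun c => c ∈ S)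
    have h1 : ((Finset.univ.filter fun c => seg c = some t).filter fun c => c ∈ S)
        = S.filter fun c => seg c = some t := by
      ext x; simp [and_comm]
    have h2 : ((Finset.univ.filter fun c => seg c = some t).filter fun c => ¬ c ∈ S)
        = {q} := by
      ext x
      simp only [Finset.mem_filter, Finset.mem_univ, true_and, Finset.mem_singleton]
      constructor
      · rintro ⟨hx, hxS⟩
        by_contra hxq
        exact hxS (hall x hx hxq)
      · rintro rfl; exact ⟨hq, hqS⟩
    rw [h1, h2, hseg t] at hsplit
    simp at hsplit
    omega
  apply Finset.card_bij
    (i := fun q hq => (seg q).get (by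
      have := (Finset.mem_filter.mp hq).2
      obtain ⟨t, ht, _⟩ := this
      rw [ht]; rfl))
  · intro q hq
    obtain ⟨t, ht, hqS, hall⟩ := (Finset.mem_filter.mp hq).2
    simp only [ht, Option.get_some, Finset.mem_filter, Finset.mem_univ, true_and]
    exact hcard t q ht hqS hall
  · intro q₁ hq₁ q₂ hq₂ heq
    obtain ⟨t₁, ht₁, hq₁S, hall₁⟩ := (Finset.mem_filter.mp hq₁).2
    obtain ⟨t₂, ht₂, hq₂S, hall₂⟩ := (Finset.mem_filter.mp hq₂).2
    simp only [ht₁, ht₂, Option.get_some] at heq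
    subst heq
    by_contra hne
    exact hq₂S (hall₁ q₂ ht₂ (Ne.symm hne))
  · intro t ht
    have htc : (S.filter fun c => seg c = some t).card = ℓ - 1 :=
      (Finset.mem_filter.mp ht).2
    have hsplit := Finset.card_filter_add_card_filter_not
      (s := Finset.univ.filter fun c => seg c = some t) (p := fun c => c ∈ S)
    have h1 : ((Finset.univ.filter fun c => seg c = some t).filter fun c => c ∈ S)
        = S.filter fun c => seg c = some t := by
      ext x; simp [and_comm]
    rw [h1, htc, hseg t] at hsplit
    have hone : ((Finset.univ.filter fun c => seg c = some t).filter
        fun c => ¬ c ∈ S).card = 1 := by omega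
    obtain ⟨q, hq⟩ := Finset.card_eq_one.mp hone
    have hqmem : q ∈ (Finset.univ.filter fun c => seg c = some t).filter
        fun c => ¬ c ∈ S := by rw [hq]; exact Finset.mem_singleton_self q
    simp only [Finset.mem_filter, Finset.mem_univ, true_and] at hqmem
    obtain ⟨hqt, hqS⟩ := hqmem
    have hall : ∀ j', seg j' = some t → j' ≠ q → j' ∈ S := by
      intro j' hj' hj'q
      by_contra hj'S
      have : j' ∈ ({q} : Finset (Fin m)) := by
        rw [← hq]
        simp only [Finset.mem_filter, Finset.mem_univ, true_and]
        exact ⟨hj', hj'S⟩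
      exact hj'q (Finset.mem_singleton.mp this)
    refine ⟨q, ?_, ?_⟩
    · simp only [Finset.mem_filter, Finset.mem_univ, true_and]
      exact ⟨t, hqt, hqS, hall⟩
    · simp [hqt]
end
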